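/- (Barwise–Eklof) Let p be a prime and let G and H be reduced abelian p-groups. Then G ≅_p H (there is a nonempty set of isomorphisms between subgroups of G and subgroups of H with the back-and-forth property) if and only if û(α,G) = û(α,H) for every ordinal α. -/

import Mathlib

noncomputable section

namespace UlmW

universe u

variable {R : Type*} [CommRing R]

/-- The submodule `p^α M`, defined by transfinite recursion on `α`. -/
def ppow {M : Type u} [AddCommGroup M] [Module R M] (p : R) (α : Ordinal.{u}) :
    Submodule R M :=
  Ordinal.limitRecOn α ⊤ (fun _ S => Submodule.map (LinearMap.lsmul R M p) S)
    fun β _ ih => ⨅ (γ : Set.Iio β), ih γ.1 γ.2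

open scoped Classical in
/-- The `p`-height of `x`, with `⊤` playing the role of `∞`. -/
def pheight {M : Type u} [AddCommGroup M] [Module R M] (p : R) (x : M) :
    WithTop Ordinal.{u} :=
  if h : ∃ α : Ordinal.{u}, x ∈ ppow p α ∧ x ∉ ppow p (α + 1) then (h.choose : WithTop Ordinal)
  else ⊤

/-- `H⁰ = {x : ∃ a ≠ 0, a • x ∈ H}`. -/
def hull {M : Type u} [AddCommGroup M] [Module R M] (H : Submodule R M) : Set M :=
  {x | ∃ a : R, a ≠ 0 ∧ a • x ∈ H}

/-- `X` is a decomposition set with respect to the single prime `p`. -/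
def IsDecompWrt {M : Type u} [AddCommGroup M] [Module R M] (p : R) (X : Set M) : Prop :=
  (LinearIndependent R (fun x : X => (x : M))) ∧
  (∀ x ∈ X, ∀ a : R, a ≠ 0 → a • x ≠ 0) ∧
  (∀ s : Finset M, ↑s ⊆ X → ∀ c : M → R,
    pheight p (∑ x ∈ s, c x • x) = s.inf fun x => pheight p (c x • x))

/-- `X` is a decomposition set (with respect to every prime of `R`). -/
def IsDecompositionSet (R : Type*) [CommRing R] {M : Type u} [AddCommGroup M] [Module R M]
    (X : Set M) : Prop :=
  ∀ p : R, Prime p → IsDecompWrt p X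

/-- partial decomposition basis, heights taken w.r.t. a fixed prime `p`. -/
def IsPDBWrt {M : Type u} [AddCommGroup M] [Module R M] (p : R) (C : Set (Set M)) : Prop :=
  C.Nonempty ∧ (∀ X ∈ C, X.Finite) ∧ (∀ X ∈ C, IsDecompWrt p X) ∧
  ∀ X ∈ C, ∀ x : M, ∃ Y ∈ C, X ⊆ Y ∧ x ∈ hull (Submodule.span R Y)

/-- partial decomposition basis (heights w.r.t. all primes of `R`). -/
def IsPDB (R : Type*) [CommRing R] {M : Type u} [AddCommGroup M] [Module R M] (C : Set (Set M)) : Prop :=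
  C.Nonempty ∧ (∀ X ∈ C, X.Finite) ∧ (∀ X ∈ C, IsDecompositionSet R X) ∧
  ∀ X ∈ C, ∀ x : M, ∃ Y ∈ C, X ⊆ Y ∧ x ∈ hull (Submodule.span R Y)

/-- A partial isomorphism system `I : G ≅_p H`. -/
def IsPartialIsoSystem {M N : Type*} [AddCommGroup M] [Module R M]
    [AddCommGroup N] [Module R N] (I : Set (M →ₗ.[R] N)) : Prop :=
  I.Nonempty ∧
  (∀ f ∈ I, Function.Injective f.toFun) ∧
  (∀ f ∈ I, ∀ a : M, ∃ g ∈ I, f ≤ g ∧ a ∈ g.domain) ∧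
  (∀ f ∈ I, ∀ b : N, ∃ g ∈ I, f ≤ g ∧ ∃ y : g.domain, g y = b)

/-- The Ulm sequence of `x`: `U(x) = (|pⁱ x|)ᵢ`. -/
def UlmSeqOf {M : Type u} [AddCommGroup M] [Module R M] (p : R) (x : M) :
    ℕ → WithTop Ordinal.{u} :=
  fun i => pheight p ((p ^ i) • x)

/-- `u` is an Ulm sequence. -/
def IsUlmSeq (u : ℕ → WithTop Ordinal.{u}) : Prop :=
  ∀ i, (u i = ⊤ → u (i + 1) = ⊤) ∧ (u i ≠ ⊤ → u i < u (i + 1))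

/-- Equivalence of Ulm sequences. -/
def UlmEquiv (u v : ℕ → WithTop Ordinal.{u}) : Prop :=
  ∃ m n : ℕ, ∀ i, u (i + n) = v (i + m)

/-- `X` contains at least `n` elements whose Ulm sequence is equivalent to `u`. -/
def HasAtLeast {M : Type u} [AddCommGroup M] [Module R M] (p : R)
    (u : ℕ → WithTop Ordinal.{u}) (n : ℕ) (X : Set M) : Prop :=
  ∃ s : Finset M, ↑s ⊆ X ∧ n ≤ s.card ∧ ∀ x ∈ s, UlmEquiv (UlmSeqOf p x) u

/-- `ŵ_C(e,G)` where `e` is the class of the Ulm sequence `u`. -/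
def wHat {M : Type u} [AddCommGroup M] [Module R M] (p : R) (C : Set (Set M))
    (u : ℕ → WithTop Ordinal.{u}) : ℕ∞ :=
  sSup {N : ℕ∞ | ∃ n : ℕ, N = (n : ℕ∞) ∧ ∃ X ∈ C, HasAtLeast p u n X}

/-- `x` is proper with respect to `S`. -/
def IsProper {M : Type u} [AddCommGroup M] [Module R M] (p : R) (S : Submodule R M)
    (x : M) : Prop :=
  ∀ s ∈ S, pheight p (x + s) ≤ pheight p x

/-- `H` is a nice submodule. -/
def IsNice {M : Type u} [AddCommGroup M] [Module R M] (p : R) (H : Submodule R M) : Prop :=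
  ∀ x : M, ∃ h ∈ H, ∀ h' ∈ H, pheight p (x + h') ≤ pheight p (x + h)

/-- The Ulm invariant `u_p(σ, M)`: the dimension of `(p^σ M)[p]/(p^{σ+1} M)[p]`
over the residue field `R/(p)`. -/
def uCard (p : R) (M : Type u) [AddCommGroup M] [Module R M] (σ : Ordinal.{u}) :
    Cardinal :=
  let V : Submodule R M := ppow p σ ⊓ Submodule.torsionBy R M p
  let W : Submodule R V := (ppow p (σ + 1) ⊓ Submodule.torsionBy R M p).comap V.subtype
  Module.rank (R ⧸ Ideal.span {p})
    ((V ⧸ W) ⧸ (Ideal.span {p} • (⊤ : Submodule R (V ⧸ W))))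

/-- `û_p(σ, M) = min (u_p(σ, M), ω)`. -/
def uHat (p : R) (M : Type u) [AddCommGroup M] [Module R M] (σ : Ordinal.{u}) : Cardinal :=
  min (uCard p M σ) Cardinal.aleph0

/-- `û_p(∞, M) = min (dim (p^∞ M)[p], ω)`. -/
def uHatInf (p : R) (M : Type u) [AddCommGroup M] [Module R M] : Cardinal :=
  let V : Submodule R M := (⨅ α : Ordinal.{u}, ppow p α) ⊓ Submodule.torsionBy R M p
  min (Module.rank (R ⧸ Ideal.span {p})
    (V ⧸ (Ideal.span {p} • (⊤ : Submodule R V)))) Cardinal.aleph0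

end UlmW

open UlmW

/-- The ideal `(p) ⊆ ℤ` is prime. -/
instance zpSpanPrime (p : ℤ) [hp : Fact (Prime p)] : (Ideal.span {p} : Ideal ℤ).IsPrime :=
  (Ideal.span_singleton_prime hp.out.ne_zero).mpr hp.out

/-- `ℤ_(p)`, the integers localized at the prime `p`. -/
abbrev Zp (p : ℤ) [Fact (Prime p)] : Type :=
  Localization.AtPrime (Ideal.span {p} : Ideal ℤ)

/-!
A back-and-forth system preserves membership in every `p^α` (at a successor step write
`a = p b` and extend the map to `b`). It therefore transports families in `(p^σ G)[p]` that are
independent modulo `p^(σ+1) G`, and such families of size `n` exist exactly when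
`n ≤ u(σ, G)`; so the invariants agree up to `ω`.

Conversely, the height-preserving isomorphisms between finite subgroups form a back-and-forth
system; by induction on the order of `x` it suffices to extend `f` to an `x` with `p x` in the
domain. Moving `x` within its coset modulo the domain, we may assume it is proper, of height
`σ`, and we look for `y` proper modulo the range, of height `σ`, with `p y = f (p x)`. If such a
move puts `p x` into `p^(σ+2) G`, then `x` is congruent modulo `p^(σ+1) G` to an element of
`(p^σ G)[p]` independent of the domain. As `f` transports independent families inside
`domain + p^(σ+1) G` to ones inside `range + p^(σ+1) H` and back, and `u(σ, G) ≤ u(σ, H)` up to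
`ω`, there is an element of `(p^σ H)[p]` independent of the range, and it corrects a `p`-th root
of `f (p x)` in `p^(σ+1) H`. Otherwise any `p`-th root of `f (p x)` in `p^σ H` is proper.
-/

universe u

namespace LinearPMap

variable {R E F : Type*} [Ring R] [AddCommGroup E] [Module R E] [AddCommGroup F] [Module R F]
  {f g : E →ₗ.[R] F}

theorem apply_mem_inverse_domain (a : f.domain) : f a ∈ (inverse f).domain := by
  rw [inverse_domain]
  exact ⟨a, rfl⟩

theorem inverse_ker_eq_bot (hf : f.toFun.ker = ⊥) : (inverse f).toFun.ker = ⊥ := by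
  refine LinearMap.ker_eq_bot'.2 fun y hy => Subtype.ext ?_
  have hmem : (((inverse f) y : E), (y : F)) ∈ f.graph := by
    have := (inverse f).mem_graph y
    rw [inverse_graph hf, Submodule.mem_map_equiv] at this
    simpa using this
  rw [show (inverse f) y = 0 from hy] at hmem
  exact f.graph_fst_eq_zero_snd hmem rfl

theorem inverse_inverse (hf : f.toFun.ker = ⊥) : inverse (inverse f) = f := by
  refine eq_of_eq_graph ?_
  rw [inverse_graph (inverse_ker_eq_bot hf), inverse_graph hf, ← Submodule.map_comp]
  convert Submodule.map_id f.graph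
  ext <;> rfl

theorem inverse_le_inverse (hf : f.toFun.ker = ⊥) (hg : g.toFun.ker = ⊥) (h : f ≤ g) :
    inverse f ≤ inverse g := by
  refine le_of_le_graph ?_
  rw [inverse_graph hf, inverse_graph hg]
  exact Submodule.map_mono (le_graph_of_le h)

theorem exists_le_sup_span_singleton {x : E} {y : F}
    (h : ∀ (c : R) (hc : c • x ∈ f.domain), f ⟨c • x, hc⟩ = c • y) :
    ∃ g : E →ₗ.[R] F, f ≤ g ∧ g.domain = f.domain ⊔ R ∙ x ∧
      ∀ z : g.domain, ∃ (u : f.domain) (c : R), (z : E) = u + c • x ∧ g z = f u + c • y := by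
  have H : ∀ c : R, c • x = 0 → RingHom.id R c • y = 0 := fun c hc => by
    rw [RingHom.id_apply, ← h c (hc ▸ f.domain.zero_mem)]
    exact (congrArg f (Subtype.ext hc : (⟨c • x, _⟩ : f.domain) = 0)).trans f.map_zero
  have hagree : ∀ (u : f.domain) (v : (mkSpanSingleton' x y H).domain), (u : E) = v →
      f u = mkSpanSingleton' x y H v := by
    rintro u ⟨v, hv⟩ huv
    obtain ⟨c, rfl⟩ := Submodule.mem_span_singleton.1 hv
    rw [mkSpanSingleton'_apply, RingHom.id_apply,
      ← h c ((show (u : E) = c • x from huv) ▸ u.2)]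
    exact congrArg f (Subtype.ext huv)
  refine ⟨f.sup _ hagree, f.left_le_sup _ hagree, rfl, fun z => ?_⟩
  obtain ⟨u, hu, v, hv, huv⟩ := Submodule.mem_sup.1 z.2
  obtain ⟨c, rfl⟩ := Submodule.mem_span_singleton.1 hv
  refine ⟨⟨u, hu⟩, c, huv.symm, ?_⟩
  rw [sup_apply hagree ⟨u, hu⟩ ⟨c • x, hv⟩ z huv, mkSpanSingleton'_apply, RingHom.id_apply]

end LinearPMap

namespace Cardinal

theorem natCast_le_min_aleph0_iff {a : Cardinal} {n : ℕ} :
    (n : Cardinal) ≤ min a ℵ₀ ↔ n ≤ a := by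
  simp [(natCast_lt_aleph0 (n := n)).le]

theorem min_aleph0_le_min_aleph0 {a b : Cardinal} (h : ∀ n : ℕ, (n : Cardinal) ≤ a → n ≤ b) :
    min a ℵ₀ ≤ min b ℵ₀ := by
  rcases lt_or_ge (min a ℵ₀) ℵ₀ with ha | ha
  · obtain ⟨n, hn⟩ := lt_aleph0.1 ha
    rw [hn, natCast_le_min_aleph0_iff]
    exact h n (hn ▸ min_le_left a ℵ₀)
  · have hb : ℵ₀ ≤ b := aleph0_le.2 fun n =>
      h n ((natCast_lt_aleph0 (n := n)).le.trans (ha.trans (min_le_left _ _)))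
    simp [hb]

theorem min_aleph0_eq_min_aleph0_iff {a b : Cardinal} :
    min a ℵ₀ = min b ℵ₀ ↔ ∀ n : ℕ, ((n : Cardinal) ≤ a ↔ n ≤ b) := by
  refine ⟨fun h n => ?_, fun h => le_antisymm (min_aleph0_le_min_aleph0 fun n => (h n).1)
    (min_aleph0_le_min_aleph0 fun n => (h n).2)⟩
  rw [← natCast_le_min_aleph0_iff, h, natCast_le_min_aleph0_iff]

end Cardinal

theorem linearIndependent_quotient_iff {ι R N : Type*} [Fintype ι] [CommRing R] {I : Ideal R}
    [AddCommGroup N] [Module R N] [Module (R ⧸ I) N] [IsScalarTower R (R ⧸ I) N] {v : ι → N} :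
    LinearIndependent (R ⧸ I) v ↔ ∀ c : ι → R, ∑ i, c i • v i = 0 → ∀ i, c i ∈ I := by
  have hsmul : ∀ (c : R) (z : N), Ideal.Quotient.mk I c • z = c • z := fun c z => by
    rw [← Ideal.Quotient.algebraMap_eq, algebraMap_smul]
  rw [Fintype.linearIndependent_iff]
  refine ⟨fun h c hc i => Ideal.Quotient.eq_zero_iff_mem.1
    (h (fun i => Ideal.Quotient.mk I (c i)) (by simpa [hsmul] using hc) i), fun h g hg i => ?_⟩
  obtain ⟨c, rfl⟩ := Ideal.Quotient.mk_surjective.comp_left g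
  exact Ideal.Quotient.eq_zero_iff_mem.2 (h c (by simpa [hsmul] using hg) i)

theorem Submodule.sum_smul_add_mem_iff {ι R M : Type*} [Fintype ι] [Ring R] [AddCommGroup M]
    [Module R M] {N : Submodule R M} {a b : ι → M} (c : ι → R) (hb : ∀ i, b i ∈ N) :
    ∑ i, c i • (a i + b i) ∈ N ↔ ∑ i, c i • a i ∈ N := by
  simp_rw [smul_add, Finset.sum_add_distrib]
  exact N.add_mem_iff_left (sum_mem fun i _ => N.smul_mem _ (hb i))

namespace UlmW

section Height

variable {R : Type*} [CommRing R] {M : Type u} [AddCommGroup M] [Module R M] {p : R}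
  {S : Submodule R M} {α β σ : Ordinal.{u}} {x s : M}

theorem ppow_zero : ppow p (0 : Ordinal.{u}) = (⊤ : Submodule R M) :=
  Ordinal.limitRecOn_zero _ _ _

theorem ppow_succ (α : Ordinal.{u}) :
    (ppow p (α + 1) : Submodule R M) = (ppow p α).map (LinearMap.lsmul R M p) :=
  Ordinal.limitRecOn_add_one _ _ _ _

theorem ppow_limit (hα : Order.IsSuccLimit α) :
    (ppow p α : Submodule R M) = ⨅ γ : Set.Iio α, ppow p γ.1 :=
  Ordinal.limitRecOn_limit _ _ _ _ hα

theorem mem_ppow_succ : x ∈ (ppow p (α + 1) : Submodule R M) ↔ ∃ y ∈ ppow p α, p • y = x := by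
  simp [ppow_succ]

theorem smul_mem_ppow_succ (hx : x ∈ (ppow p α : Submodule R M)) : p • x ∈ ppow p (α + 1) :=
  mem_ppow_succ.2 ⟨x, hx, rfl⟩

theorem mem_ppow_limit (hα : Order.IsSuccLimit α) :
    x ∈ (ppow p α : Submodule R M) ↔ ∀ β < α, x ∈ (ppow p β : Submodule R M) := by
  simp [ppow_limit hα]

theorem ppow_succ_le (α : Ordinal.{u}) : (ppow p (α + 1) : Submodule R M) ≤ ppow p α := by
  rw [ppow_succ]
  rintro _ ⟨y, hy, rfl⟩
  exact (ppow p α).smul_mem p hy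

theorem ppow_antitone : Antitone (ppow p : Ordinal.{u} → Submodule R M) := by
  intro α β hαβ
  induction β using Ordinal.limitRecOn with
  | zero => rw [nonpos_iff_eq_zero.1 hαβ]
  | add_one β ih =>
    rcases hαβ.lt_or_eq with h | rfl
    · exact (ppow_succ_le β).trans (ih (Order.lt_succ_iff.1 h))
    · exact le_rfl
  | limit β hβ ih =>
    rcases hαβ.lt_or_eq with h | rfl
    · rw [ppow_limit hβ]
      exact iInf_le_of_le ⟨α, h⟩ le_rfl
    · exact le_rfl

theorem mem_ppow_of_le (hαβ : α ≤ β) (hx : x ∈ (ppow p β : Submodule R M)) : x ∈ ppow p α :=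
  ppow_antitone hαβ hx

theorem mem_ppow_iff_le_pheight :
    x ∈ (ppow p α : Submodule R M) ↔ (α : WithTop Ordinal) ≤ pheight p x := by
  unfold pheight
  split_ifs with h
  · obtain ⟨hmem, hnot⟩ := h.choose_spec
    rw [WithTop.coe_le_coe]
    exact ⟨fun hx => not_lt.1 fun hlt => hnot (mem_ppow_of_le (Order.add_one_le_of_lt hlt) hx),
      fun hle => mem_ppow_of_le hle hmem⟩
  · push Not at h
    simp only [le_top, iff_true]
    induction α using Ordinal.limitRecOn with
    | zero => rw [ppow_zero]; trivial
    | add_one α ih => exact h α ih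
    | limit α hα ih => exact (mem_ppow_limit hα).2 ih

theorem pheight_ne_top (hred : (⨅ α : Ordinal.{u}, (ppow p α : Submodule R M)) = ⊥)
    (hx : x ≠ 0) : pheight p x ≠ ⊤ := by
  intro htop
  refine hx ((Submodule.mem_bot R).1 (hred ▸ Submodule.mem_iInf _ |>.2 fun α => ?_))
  exact mem_ppow_iff_le_pheight.2 (htop ▸ le_top)

/-- `x` has height `σ`, the largest height in the coset `x + S`. -/
def IsProperAt (p : R) (S : Submodule R M) (σ : Ordinal.{u}) (x : M) : Prop :=
  x ∈ (ppow p σ : Submodule R M) ∧ ∀ s ∈ S, x + s ∉ (ppow p (σ + 1) : Submodule R M)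

theorem IsProperAt.notMem (hx : IsProperAt p S σ x) : x ∉ S := fun h =>
  hx.2 (-x) (S.neg_mem h) (by rw [add_neg_cancel]; exact zero_mem _)

theorem IsProperAt.add (hx : IsProperAt p S σ x) (hs : s ∈ S)
    (hsσ : s ∈ (ppow p σ : Submodule R M)) : IsProperAt p S σ (x + s) :=
  ⟨add_mem hx.1 hsσ, fun t ht => by rw [add_assoc]; exact hx.2 _ (S.add_mem hs ht)⟩

theorem IsProperAt.add_mem_ppow_iff (hx : IsProperAt p S σ x) (hs : s ∈ S) :
    x + s ∈ (ppow p α : Submodule R M) ↔ α ≤ σ ∧ s ∈ (ppow p α : Submodule R M) := by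
  refine ⟨fun h => ?_, fun h => add_mem (mem_ppow_of_le h.1 hx.1) h.2⟩
  have hα : α ≤ σ := not_lt.1 fun hlt =>
    hx.2 s hs (mem_ppow_of_le (Order.add_one_le_of_lt hlt) h)
  exact ⟨hα, by simpa using sub_mem h (mem_ppow_of_le hα hx.1)⟩

theorem exists_isProperAt_add (hred : (⨅ α : Ordinal.{u}, (ppow p α : Submodule R M)) = ⊥)
    (hS : (S : Set M).Finite) (hx : x ∉ S) : ∃ s ∈ S, ∃ σ, IsProperAt p S σ (x + s) := by
  obtain ⟨s₀, hs₀, hmax⟩ :=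
    Set.exists_max_image (S : Set M) (fun s => pheight p (x + s)) hS ⟨0, S.zero_mem⟩
  have hne : x + s₀ ≠ 0 := fun h =>
    hx (by rw [eq_neg_of_add_eq_zero_left h]; exact S.neg_mem hs₀)
  obtain ⟨σ, hσ⟩ := WithTop.ne_top_iff_exists.1 (pheight_ne_top hred hne)
  refine ⟨s₀, hs₀, σ, mem_ppow_iff_le_pheight.2 hσ.le, fun s hs hmem => ?_⟩
  have h := (mem_ppow_iff_le_pheight.1 hmem).trans
    (add_assoc x s₀ s ▸ hmax _ (S.add_mem hs₀ hs))
  rw [← hσ, WithTop.coe_le_coe] at h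
  exact (Order.lt_add_one_iff.2 le_rfl).not_ge h

end Height

section PGroup

variable {G : Type u} [AddCommGroup G] {p : ℤ} {S : Submodule ℤ G} {σ : Ordinal.{u}} {x : G}

theorem exists_smul_smul_eq (hp : Prime p) (hx : ∃ k : ℕ, p ^ k • x = 0) {c : ℤ}
    (hc : ¬p ∣ c) : ∃ r : ℤ, r • c • x = x := by
  obtain ⟨k, hk⟩ := hx
  obtain ⟨a, b, hab⟩ := (hp.coprime_iff_not_dvd.2 hc).pow_left (m := k)
  refine ⟨b, ?_⟩
  rw [smul_smul, show b * c = 1 - a * p ^ k by linear_combination hab, sub_smul, one_smul,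
    mul_smul, hk, smul_zero, sub_zero]

theorem mem_of_smul_mem (hp : Prime p) (hx : ∃ k : ℕ, p ^ k • x = 0) {c : ℤ} (hc : ¬p ∣ c)
    {N : Submodule ℤ G} (h : c • x ∈ N) : x ∈ N := by
  obtain ⟨r, hr⟩ := exists_smul_smul_eq hp hx hc
  exact hr ▸ N.smul_mem r h

theorem IsProperAt.smul (hp : Prime p) (hx : IsProperAt p S σ x) (hxo : ∃ k : ℕ, p ^ k • x = 0)
    {c : ℤ} (hc : ¬p ∣ c) : IsProperAt p S σ (c • x) := by
  refine ⟨Submodule.smul_mem _ c hx.1, fun s hs hmem => ?_⟩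
  obtain ⟨r, hr⟩ := exists_smul_smul_eq hp hxo hc
  refine hx.2 (r • s) (S.smul_mem r hs) ?_
  simpa [smul_add, hr] using Submodule.smul_mem _ r hmem

theorem IsProperAt.add_smul_mem_ppow_iff (hp : Prime p) (hx : IsProperAt p S σ x)
    (hxo : ∃ k : ℕ, p ^ k • x = 0) {c : ℤ} (hc : ¬p ∣ c) {s : G} (hs : s ∈ S)
    {α : Ordinal.{u}} :
    s + c • x ∈ (ppow p α : Submodule ℤ G) ↔ α ≤ σ ∧ s ∈ (ppow p α : Submodule ℤ G) := by
  rw [add_comm]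
  exact (hx.smul hp hxo hc).add_mem_ppow_iff hs

theorem finite_sup_span_singleton (hS : (S : Set G).Finite) (hx : IsOfFinAddOrder x) :
    ((S ⊔ ℤ ∙ x : Submodule ℤ G) : Set G).Finite := by
  have hspan : ((ℤ ∙ x : Submodule ℤ G) : Set G) = AddSubgroup.zmultiples x := by
    ext
    simp [Submodule.mem_span_singleton, AddSubgroup.mem_zmultiples_iff]
  rw [Submodule.coe_sup, hspan]
  exact hS.add (finite_zmultiples.2 hx)

end PGroup

section Socle

variable {M : Type u} [AddCommGroup M] {p : ℤ} {σ : Ordinal.{u}} {x : M} {n : ℕ}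

def socle (p : ℤ) (σ : Ordinal.{u}) : Submodule ℤ M :=
  ppow p σ ⊓ Submodule.torsionBy ℤ M p

theorem mem_socle :
    x ∈ (socle p σ : Submodule ℤ M) ↔ x ∈ (ppow p σ : Submodule ℤ M) ∧ p • x = 0 :=
  Iff.rfl

def IsIndepSocleFamily (p : ℤ) (σ : Ordinal.{u}) (x : Fin n → M) : Prop :=
  (∀ i, x i ∈ (socle p σ : Submodule ℤ M)) ∧
    ∀ c : Fin n → ℤ, ∑ i, c i • x i ∈ (ppow p (σ + 1) : Submodule ℤ M) → ∀ i, p ∣ c i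

theorem natCast_le_uCard_iff (hp : Prime p) :
    (n : Cardinal) ≤ uCard p M σ ↔ ∃ x : Fin n → M, IsIndepSocleFamily p σ x := by
  set V : Submodule ℤ M := socle p σ
  set W : Submodule ℤ V := (ppow p (σ + 1) ⊓ Submodule.torsionBy ℤ M p).comap V.subtype
  set J : Ideal ℤ := Ideal.span {p}
  have : J.IsMaximal := PrincipalIdealRing.isMaximal_of_irreducible hp.irreducible
  have hpV : ∀ z : V, p • z = 0 := fun z => Subtype.ext (mem_socle.1 z.2).2
  have hbot : J • (⊤ : Submodule ℤ (V ⧸ W)) = ⊥ := by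
    refine le_bot_iff.1 (Submodule.smul_le.2 fun r hr z _ => ?_)
    obtain ⟨a, rfl⟩ := Ideal.mem_span_singleton'.1 hr
    obtain ⟨v, rfl⟩ := W.mkQ_surjective z
    rw [← map_smul, mul_smul, hpV v, smul_zero, map_zero]
    exact zero_mem _
  set L : V →ₗ[ℤ] (V ⧸ W) ⧸ J • (⊤ : Submodule ℤ (V ⧸ W)) :=
    (J • (⊤ : Submodule ℤ (V ⧸ W))).mkQ ∘ₗ W.mkQ
  have hL : Function.Surjective L :=
    (Submodule.mkQ_surjective _).comp (Submodule.mkQ_surjective _)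
  have hker : ∀ z : V, L z = 0 ↔ (z : M) ∈ (ppow p (σ + 1) : Submodule ℤ M) := fun z => by
    simp only [L, LinearMap.comp_apply, Submodule.mkQ_apply, Submodule.Quotient.mk_eq_zero, hbot,
      Submodule.mem_bot, W, Submodule.mem_comap, Submodule.subtype_apply, Submodule.mem_inf]
    exact and_iff_left (mem_socle.1 z.2).2
  have hsum : ∀ (c : Fin n → ℤ) (z : Fin n → V),
      ∑ i, c i • L (z i) = 0 ↔ ∑ i, c i • (z i : M) ∈ (ppow p (σ + 1) : Submodule ℤ M) := by
    intro c z
    simp_rw [← map_smul, ← map_sum, hker, Submodule.coe_sum, Submodule.coe_smul]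
  change _ ≤ Module.rank (ℤ ⧸ J) _ ↔ _
  rw [Module.le_rank_iff]
  constructor
  · rintro ⟨v, hv⟩
    obtain ⟨z, rfl⟩ := hL.comp_left v
    refine ⟨fun i => z i, fun i => (z i).2, fun c hc i => ?_⟩
    exact Ideal.mem_span_singleton.1 (linearIndependent_quotient_iff.1 hv c ((hsum c z).2 hc) i)
  · rintro ⟨x, hx, hind⟩
    refine ⟨fun i => L ⟨x i, hx i⟩, linearIndependent_quotient_iff.2 fun c hc i => ?_⟩
    exact Ideal.mem_span_singleton.2 (hind c ((hsum c _).1 hc) i)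

theorem exists_sub_mem_socle (hx : x ∈ (ppow p σ : Submodule ℤ M))
    (hpx : p • x ∈ (ppow p (σ + 1 + 1) : Submodule ℤ M)) :
    ∃ w ∈ (ppow p (σ + 1) : Submodule ℤ M), x - w ∈ socle p σ := by
  obtain ⟨w, hw, hpw⟩ := mem_ppow_succ.1 hpx
  exact ⟨w, hw, mem_socle.2 ⟨sub_mem hx (ppow_succ_le σ hw), by rw [smul_sub, hpw, sub_self]⟩⟩

theorem IsIndepSocleFamily.zero : IsIndepSocleFamily p σ (Fin.elim0 : Fin 0 → M) :=
  ⟨fun i => i.elim0, fun _ _ i => i.elim0⟩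

theorem IsIndepSocleFamily.le_card (hp : Prime p) {x : Fin n → M}
    (hx : IsIndepSocleFamily p σ x) {S : Submodule ℤ M} (hS : (S : Set M).Finite)
    (hxS : ∀ i, x i ∈ S ⊔ ppow p (σ + 1)) : n ≤ Nat.card S := by
  choose s hs w hw hsw using fun i => Submodule.mem_sup.1 (hxS i)
  have : Finite S := hS.to_subtype
  suffices Function.Injective fun i => (⟨s i, hs i⟩ : S) by
    simpa using Nat.card_le_card_of_injective _ this
  intro i j hij
  by_contra hne
  have hmem : ∑ k, (Pi.single i 1 - Pi.single j 1 : Fin n → ℤ) k • x k ∈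
      (ppow p (σ + 1) : Submodule ℤ M) := by
    have hsij : s i = s j := congrArg Subtype.val hij
    have : ∑ k, (Pi.single i 1 - Pi.single j 1 : Fin n → ℤ) k • x k = x i - x j := by
      simp [sub_smul, Finset.sum_sub_distrib, Pi.single_apply]
    rw [this, ← hsw i, ← hsw j, hsij, add_sub_add_left_eq_sub]
    exact sub_mem (hw i) (hw j)
  have := hx.2 _ hmem i
  simp [Ne.symm hne] at this
  exact hp.not_dvd_one this

theorem IsIndepSocleFamily.cons (hp : Prime p) {x : Fin n → M} (hx : IsIndepSocleFamily p σ x)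
    {A : Submodule ℤ M} (hxA : ∀ i, x i ∈ A) (hA : ppow p (σ + 1) ≤ A) {z : M}
    (hz : z ∈ socle p σ) (hzA : z ∉ A) : IsIndepSocleFamily p σ (Fin.cons z x) := by
  have hpz : p • z = 0 := (mem_socle.1 hz).2
  refine ⟨Fin.cases hz hx.1, fun c hc => ?_⟩
  simp only [Fin.sum_univ_succ, Fin.cons_zero, Fin.cons_succ] at hc
  have hc0 : p ∣ c 0 := by
    by_contra hc0
    refine hzA (mem_of_smul_mem hp (x := z) ⟨1, by rwa [pow_one]⟩ hc0 ?_)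
    simpa using sub_mem (hA hc)
      (sum_mem (t := Finset.univ) fun i _ => A.smul_mem (c i.succ) (hxA i))
  obtain ⟨d, hd⟩ := hc0
  rw [hd, mul_comm, mul_smul, hpz, smul_zero, zero_add] at hc
  exact fun i => Fin.cases ⟨d, hd⟩ (hx.2 _ hc) i

end Socle

section PartialMaps

variable {G H : Type u} [AddCommGroup G] [AddCommGroup H] {p : ℤ} {σ : Ordinal.{u}} {n : ℕ}
  {f : G →ₗ.[ℤ] H}

def PreservesPPow (p : ℤ) (f : G →ₗ.[ℤ] H) : Prop :=
  ∀ (a : f.domain) (α : Ordinal.{u}),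
    (a : G) ∈ (ppow p α : Submodule ℤ G) ↔ f a ∈ (ppow p α : Submodule ℤ H)

theorem PreservesPPow.inverse (hf : Function.Injective f.toFun) (h : PreservesPPow p f) :
    PreservesPPow p f.inverse := by
  intro b α
  obtain ⟨a, ha⟩ : (b : H) ∈ LinearMap.range f.toFun := by
    rw [← LinearPMap.inverse_domain]
    exact b.2
  rw [LinearPMap.inverse_apply_eq (LinearMap.ker_eq_bot.2 hf) ha, ← ha]
  exact (h a α).symm

theorem IsIndepSocleFamily.exists_map (hf : PreservesPPow p f) {x : Fin n → G}
    (hx : IsIndepSocleFamily p σ x) (hxS : ∀ i, x i ∈ f.domain ⊔ ppow p (σ + 1)) :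
    ∃ y : Fin n → H, IsIndepSocleFamily p σ y ∧
      ∀ i, y i ∈ LinearMap.range f.toFun ⊔ ppow p (σ + 1) := by
  choose s hs w hw hsw using fun i => Submodule.mem_sup.1 (hxS i)
  have hsσ : ∀ i, s i ∈ (ppow p σ : Submodule ℤ G) ∧
      p • s i ∈ (ppow p (σ + 1 + 1) : Submodule ℤ G) := by
    intro i
    obtain ⟨hxσ, hpx⟩ := mem_socle.1 (hx.1 i)
    rw [eq_sub_of_add_eq (hsw i), smul_sub, hpx, zero_sub]
    exact ⟨sub_mem hxσ (ppow_succ_le σ (hw i)), neg_mem (smul_mem_ppow_succ (hw i))⟩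
  let t : Fin n → f.domain := fun i => ⟨s i, hs i⟩
  have htσ : ∀ i, f (t i) ∈ (ppow p σ : Submodule ℤ H) ∧
      p • f (t i) ∈ (ppow p (σ + 1 + 1) : Submodule ℤ H) := fun i =>
    ⟨(hf (t i) σ).1 (hsσ i).1, by rw [← f.map_smul]; exact (hf (p • t i) _).1 (hsσ i).2⟩
  -- the images `f (s i)` are moved back into the socle by elements `w' i` of `p^(σ+1) H`
  choose w' hw' hy using fun i => exists_sub_mem_socle (htσ i).1 (htσ i).2
  refine ⟨fun i => f (t i) - w' i, ⟨hy, fun c hc => hx.2 c ?_⟩, fun i => Submodule.mem_sup.2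
    ⟨f (t i), ⟨t i, rfl⟩, -w' i, neg_mem (hw' i), (sub_eq_add_neg _ _).symm⟩⟩
  simp_rw [sub_eq_add_neg] at hc
  rw [Submodule.sum_smul_add_mem_iff c fun i => neg_mem (hw' i)] at hc
  simp_rw [← hsw]
  rw [Submodule.sum_smul_add_mem_iff c hw]
  have hft : ∑ i, c i • f (t i) = f (∑ i, c i • t i) := by
    simp only [← LinearPMap.map_smul]
    exact (map_sum f.toFun _ _).symm
  rw [hft] at hc
  simpa [t] using (hf _ _).2 hc

theorem apply_smul_eq_of_mem_graph (hp : Prime p) {x : G} {y : H}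
    (hxo : ∃ k : ℕ, p ^ k • x = 0) (hx : x ∉ f.domain) (hxy : (p • x, p • y) ∈ f.graph) (c : ℤ)
    (hc : c • x ∈ f.domain) : f ⟨c • x, hc⟩ = c • y := by
  have hpx : p • x ∈ f.domain := LinearPMap.mem_domain_of_mem_graph hxy
  obtain ⟨d, rfl⟩ : p ∣ c := by_contra fun h => hx (mem_of_smul_mem hp hxo h hc)
  have : (⟨(p * d) • x, hc⟩ : f.domain) = d • ⟨p • x, hpx⟩ := by
    ext
    change (p * d) • x = d • p • x
    rw [smul_smul, mul_comm]
  rw [this, f.map_smul, ← (LinearPMap.image_iff hpx).2 hxy, smul_smul, mul_comm]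

structure IsFiniteHeightIso (p : ℤ) (f : G →ₗ.[ℤ] H) : Prop where
  finite : (f.domain : Set G).Finite
  injective : Function.Injective f.toFun
  preservesPPow : PreservesPPow p f

theorem isFiniteHeightIso_bot : IsFiniteHeightIso p (⊥ : G →ₗ.[ℤ] H) := by
  have h0 : ∀ a : (⊥ : G →ₗ.[ℤ] H).domain, a = 0 := fun a =>
    Subtype.ext ((Submodule.mem_bot ℤ).1 a.2)
  refine ⟨?_, fun a b _ => by rw [h0 a, h0 b], fun a α => ?_⟩
  · change ((⊥ : Submodule ℤ G) : Set G).Finite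
    simp
  rw [h0 a, LinearPMap.map_zero]
  exact iff_of_true (zero_mem _) (zero_mem _)

theorem IsFiniteHeightIso.inverse (hf : IsFiniteHeightIso p f) :
    IsFiniteHeightIso p f.inverse := by
  have : Finite f.domain := hf.finite.to_subtype
  refine ⟨?_, ?_, hf.preservesPPow.inverse hf.injective⟩
  · rw [LinearPMap.inverse_domain, LinearMap.coe_range]
    exact Set.finite_range _
  · exact LinearMap.ker_eq_bot.1
      (LinearPMap.inverse_ker_eq_bot (LinearMap.ker_eq_bot.2 hf.injective))

theorem IsFiniteHeightIso.of_le {g : G →ₗ.[ℤ] H} (hf : IsFiniteHeightIso p f) (hfg : f ≤ g)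
    (hfin : (g.domain : Set G).Finite)
    (hnew : ∀ z : g.domain, (z : G) ∉ f.domain →
      g z ≠ 0 ∧ ∀ α, (z : G) ∈ (ppow p α : Submodule ℤ G) ↔ g z ∈ (ppow p α : Submodule ℤ H)) :
    IsFiniteHeightIso p g := by
  have hold : ∀ (z : g.domain) (hz : (z : G) ∈ f.domain), g z = f ⟨z, hz⟩ :=
    fun z hz => (hfg.2 (x := ⟨z, hz⟩) (y := z) rfl).symm
  refine ⟨hfin, (injective_iff_map_eq_zero g.toFun).2 fun z hz0 => ?_, fun z α => ?_⟩
  · by_cases hz : (z : G) ∈ f.domain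
    · have := (injective_iff_map_eq_zero f.toFun).1 hf.injective ⟨z, hz⟩
        ((hold z hz).symm.trans hz0)
      exact Subtype.ext (congrArg Subtype.val this :)
    · exact ((hnew z hz).1 hz0).elim
  · by_cases hz : (z : G) ∈ f.domain
    · rw [hold z hz]
      exact hf.preservesPPow ⟨z, hz⟩ α
    · exact (hnew z hz).2 α

end PartialMaps

section Systems

variable {G H : Type u} [AddCommGroup G] [AddCommGroup H] {p : ℤ} {I : Set (G →ₗ.[ℤ] H)}

theorem IsPartialIsoSystem.inverse (hI : IsPartialIsoSystem I) :
    IsPartialIsoSystem (LinearPMap.inverse '' I) := by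
  have hker : ∀ f ∈ I, f.toFun.ker = ⊥ := fun f hf => LinearMap.ker_eq_bot.2 (hI.2.1 f hf)
  refine ⟨hI.1.image _, ?_, ?_, ?_⟩
  · rintro _ ⟨f, hf, rfl⟩
    exact LinearMap.ker_eq_bot.1 (LinearPMap.inverse_ker_eq_bot (hker f hf))
  · rintro _ ⟨f, hf, rfl⟩ b
    obtain ⟨g, hg, hfg, y, rfl⟩ := hI.2.2.2 f hf b
    exact ⟨g.inverse, ⟨g, hg, rfl⟩, LinearPMap.inverse_le_inverse (hker f hf) (hker g hg) hfg,
      LinearPMap.apply_mem_inverse_domain y⟩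
  · rintro _ ⟨f, hf, rfl⟩ a
    obtain ⟨g, hg, hfg, ha⟩ := hI.2.2.1 f hf a
    exact ⟨g.inverse, ⟨g, hg, rfl⟩, LinearPMap.inverse_le_inverse (hker f hf) (hker g hg) hfg,
      ⟨⟨_, LinearPMap.apply_mem_inverse_domain ⟨a, ha⟩⟩,
      LinearPMap.inverse_apply_eq (hker g hg) (x := ⟨a, ha⟩) rfl⟩⟩

theorem IsPartialIsoSystem.map_mem_ppow (hI : IsPartialIsoSystem I) (α : Ordinal.{u}) :
    ∀ f ∈ I, ∀ a : f.domain,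
      (a : G) ∈ (ppow p α : Submodule ℤ G) → f a ∈ (ppow p α : Submodule ℤ H) := by
  induction α using Ordinal.limitRecOn with
  | zero =>
    intro f _ a _
    rw [ppow_zero]
    trivial
  | add_one α ih =>
    intro f hf a ha
    obtain ⟨y, hy, hya⟩ := mem_ppow_succ.1 ha
    obtain ⟨g, hg, hfg, hyg⟩ := hI.2.2.1 f hf y
    rw [hfg.2 (y := p • ⟨y, hyg⟩) hya.symm, g.map_smul]
    exact smul_mem_ppow_succ (ih g hg _ hy)
  | limit α hα ih =>
    intro f hf a ha
    exact (mem_ppow_limit hα).2 fun β hβ => ih β hβ f hf a ((mem_ppow_limit hα).1 ha β hβ)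

theorem IsPartialIsoSystem.preservesPPow (hI : IsPartialIsoSystem I) {f : G →ₗ.[ℤ] H}
    (hf : f ∈ I) : PreservesPPow p f := by
  refine fun a α => ⟨hI.map_mem_ppow α f hf a, fun ha => ?_⟩
  have hker : f.toFun.ker = ⊥ := LinearMap.ker_eq_bot.2 (hI.2.1 f hf)
  have := hI.inverse.map_mem_ppow α f.inverse ⟨f, hf, rfl⟩
    ⟨f a, LinearPMap.apply_mem_inverse_domain a⟩ ha
  rwa [LinearPMap.inverse_apply_eq hker (x := a) rfl] at this

theorem IsPartialIsoSystem.exists_subset_domain (hI : IsPartialIsoSystem I) (s : Finset G) :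
    ∃ g ∈ I, ↑s ⊆ (g.domain : Set G) := by
  classical
  induction s using Finset.induction_on with
  | empty =>
    obtain ⟨f, hf⟩ := hI.1
    exact ⟨f, hf, by simp⟩
  | insert a s _ ih =>
    obtain ⟨f, hf, hs⟩ := ih
    obtain ⟨g, hg, hfg, ha⟩ := hI.2.2.1 f hf a
    exact ⟨g, hg, by simpa [Set.insert_subset_iff] using ⟨ha, hs.trans hfg.1⟩⟩

theorem IsPartialIsoSystem.natCast_le_uCard (hp : Prime p) (hI : IsPartialIsoSystem I)
    {σ : Ordinal.{u}} {n : ℕ} (h : (n : Cardinal) ≤ uCard p G σ) :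
    (n : Cardinal) ≤ uCard p H σ := by
  classical
  rw [natCast_le_uCard_iff hp] at h ⊢
  obtain ⟨x, hx⟩ := h
  obtain ⟨g, hg, hxg⟩ := hI.exists_subset_domain (Finset.univ.image x)
  obtain ⟨y, hy, -⟩ := hx.exists_map (hI.preservesPPow hg) fun i =>
    Submodule.mem_sup_left (hxg (by simp))
  exact ⟨y, hy⟩

end Systems

section Extension

variable {G H : Type u} [AddCommGroup G] [AddCommGroup H] {p : ℤ} {σ : Ordinal.{u}}
  {f : G →ₗ.[ℤ] H}

theorem IsFiniteHeightIso.exists_socle_notMem_range_sup (hp : Prime p)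
    (hf : IsFiniteHeightIso p f)
    (hu : ∀ n : ℕ, (n : Cardinal) ≤ uCard p G σ → (n : Cardinal) ≤ uCard p H σ) {z : G}
    (hz : z ∈ socle p σ) (hzf : z ∉ f.domain ⊔ ppow p (σ + 1)) :
    ∃ z' ∈ (socle p σ : Submodule ℤ H), z' ∉ LinearMap.range f.toFun ⊔ ppow p (σ + 1) := by
  classical
  by_contra! hall
  let P : ℕ → Prop := fun k => ∃ y : Fin k → H, IsIndepSocleFamily p σ y ∧
    ∀ i, y i ∈ LinearMap.range f.toFun ⊔ ppow p (σ + 1)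
  have hfin : (LinearMap.range f.toFun : Set H).Finite := by
    simpa [LinearPMap.inverse_domain] using hf.inverse.finite
  have hP : ∀ k, P k → k ≤ Nat.card (LinearMap.range f.toFun) :=
    fun k ⟨y, hy, hyT⟩ => hy.le_card hp hfin hyT
  -- a largest family for `H`, pulled back to `G` and extended by `z`, is too long for `H`
  set d := Nat.findGreatest P (Nat.card (LinearMap.range f.toFun))
  obtain ⟨y, hy, hyT⟩ : P d :=
    Nat.findGreatest_spec (Nat.zero_le _) ⟨Fin.elim0, .zero, fun i => i.elim0⟩
  obtain ⟨x, hx, hxS⟩ :=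
    hy.exists_map hf.inverse.preservesPPow (by rwa [LinearPMap.inverse_domain])
  rw [LinearPMap.inverse_range (LinearMap.ker_eq_bot.2 hf.injective)] at hxS
  have hGd : ((d + 1 : ℕ) : Cardinal) ≤ uCard p G σ :=
    (natCast_le_uCard_iff hp).2 ⟨_, hx.cons hp hxS le_sup_right hz hzf⟩
  obtain ⟨y', hy'⟩ := (natCast_le_uCard_iff hp).1 (hu _ hGd)
  have hPd : P (d + 1) := ⟨y', hy', fun i => hall _ (hy'.1 i)⟩
  have := Nat.le_findGreatest (hP _ hPd) hPd
  omega

theorem IsFiniteHeightIso.exists_partner_of_deep (hp : Prime p) (hf : IsFiniteHeightIso p f)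
    (hu : ∀ n : ℕ, (n : Cardinal) ≤ uCard p G σ → (n : Cardinal) ≤ uCard p H σ) {x : G}
    (hx : IsProperAt p f.domain σ x) (hpx : p • x ∈ f.domain)
    (hdeep : p • x ∈ (ppow p (σ + 1 + 1) : Submodule ℤ G)) :
    ∃ y : H, IsProperAt p (LinearMap.range f.toFun) σ y ∧ (p • x, p • y) ∈ f.graph := by
  obtain ⟨w, hw, hz⟩ := exists_sub_mem_socle hx.1 hdeep
  have hzf : x - w ∉ f.domain ⊔ ppow p (σ + 1) := by
    intro h
    obtain ⟨s, hs, w', hw', hsw⟩ := Submodule.mem_sup.1 h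
    refine hx.2 (-s) (neg_mem hs) ?_
    have : x + -s = w + w' := by
      calc x + -s = w + (x - w) + -s := by abel
        _ = w + w' := by rw [← hsw]; abel
    rw [this]
    exact add_mem hw hw'
  obtain ⟨z', hz', hz'f⟩ := hf.exists_socle_notMem_range_sup hp hu hz hzf
  obtain ⟨y₁, hy₁, hpy₁⟩ := mem_ppow_succ.1 ((hf.preservesPPow ⟨p • x, hpx⟩ _).1 hdeep)
  refine ⟨z' + y₁, ⟨add_mem (mem_socle.1 hz').1 (ppow_succ_le σ hy₁),
    fun t ht hmem => hz'f ?_⟩, ?_⟩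
  · exact Submodule.mem_sup.2 ⟨-t, neg_mem ht, z' + y₁ + t - y₁, sub_mem hmem hy₁, by abel⟩
  · rw [smul_add, (mem_socle.1 hz').2, zero_add, hpy₁]
    exact f.mem_graph ⟨p • x, hpx⟩

theorem IsFiniteHeightIso.exists_partner (hp : Prime p) (hf : IsFiniteHeightIso p f)
    (hu : ∀ n : ℕ, (n : Cardinal) ≤ uCard p G σ → (n : Cardinal) ≤ uCard p H σ) {x : G}
    (hx : IsProperAt p f.domain σ x) (hpx : p • x ∈ f.domain) :
    ∃ u ∈ f.domain ⊓ ppow p σ, ∃ y : H,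
      IsProperAt p (LinearMap.range f.toFun) σ y ∧ (p • (x + u), p • y) ∈ f.graph := by
  by_cases hdeep : ∃ u ∈ f.domain ⊓ ppow p σ,
      p • (x + u) ∈ (ppow p (σ + 1 + 1) : Submodule ℤ G)
  · obtain ⟨u, hu', hdeep⟩ := hdeep
    have hpxu : p • (x + u) ∈ f.domain := by
      rw [smul_add]
      exact add_mem hpx (Submodule.smul_mem _ _ hu'.1)
    exact ⟨u, hu', hf.exists_partner_of_deep hp hu (hx.add hu'.1 hu'.2) hpxu hdeep⟩
  push Not at hdeep
  obtain ⟨y, hy, hpy⟩ := mem_ppow_succ.1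
    ((hf.preservesPPow ⟨p • x, hpx⟩ (σ + 1)).1 (smul_mem_ppow_succ hx.1))
  refine ⟨0, zero_mem _, y, ⟨hy, ?_⟩, by rw [add_zero, hpy]; exact f.mem_graph ⟨p • x, hpx⟩⟩
  rintro _ ⟨v, rfl⟩ hyv
  have hv : (v : G) ∈ (ppow p σ : Submodule ℤ G) :=
    (hf.preservesPPow v σ).2 (by simpa using sub_mem (ppow_succ_le σ hyv) hy)
  refine hdeep v ⟨v.2, hv⟩ ?_
  rw [smul_add]
  refine (hf.preservesPPow (⟨p • x, hpx⟩ + p • v) _).2 ?_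
  rw [f.map_add, f.map_smul, ← hpy, ← smul_add]
  exact smul_mem_ppow_succ hyv

theorem IsFiniteHeightIso.exists_extend_of_partner (hp : Prime p)
    (hG : ∀ g : G, ∃ k : ℕ, p ^ k • g = 0) (hH : ∀ h : H, ∃ k : ℕ, p ^ k • h = 0)
    (hf : IsFiniteHeightIso p f) {x : G} {y : H} (hx : IsProperAt p f.domain σ x)
    (hy : IsProperAt p (LinearMap.range f.toFun) σ y) (hxy : (p • x, p • y) ∈ f.graph) :
    ∃ g : G →ₗ.[ℤ] H, f ≤ g ∧ IsFiniteHeightIso p g ∧ x ∈ g.domain := by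
  have hpx : p • x ∈ f.domain := LinearPMap.mem_domain_of_mem_graph hxy
  obtain ⟨g, hfg, hdom, hg⟩ :=
    f.exists_le_sup_span_singleton (apply_smul_eq_of_mem_graph hp (hG x) hx.notMem hxy)
  obtain ⟨k, hk⟩ := hG x
  have hfin : (g.domain : Set G).Finite := by
    rw [hdom]
    exact finite_sup_span_singleton hf.finite
      (isOfFinAddOrder_iff_zsmul_eq_zero.2 ⟨p ^ k, pow_ne_zero k hp.ne_zero, hk⟩)
  refine ⟨g, hfg, hf.of_le hfg hfin fun z hzf => ?_, ?_⟩
  · obtain ⟨u, c, hz, hgz⟩ := hg z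
    have hc : ¬p ∣ c := by
      rintro ⟨d, rfl⟩
      refine hzf ?_
      rw [hz, mul_comm, mul_smul]
      exact add_mem u.2 (Submodule.smul_mem _ d hpx)
    have hxα := fun α => hx.add_smul_mem_ppow_iff hp ⟨k, hk⟩ hc u.2 (α := α)
    have hyα := fun α => hy.add_smul_mem_ppow_iff hp (hH y) hc (s := f u) ⟨u, rfl⟩ (α := α)
    rw [hz, hgz]
    refine ⟨fun h0 => ?_, fun α => by rw [hxα, hyα, hf.preservesPPow u α]⟩
    exact (Order.lt_add_one_iff.2 le_rfl).not_ge ((hyα (σ + 1)).1 (h0 ▸ zero_mem _)).1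
  · rw [hdom]
    exact Submodule.mem_sup_right (Submodule.mem_span_singleton_self x)

variable (hp : Prime p) (hG : ∀ g : G, ∃ k : ℕ, p ^ k • g = 0)
  (hH : ∀ h : H, ∃ k : ℕ, p ^ k • h = 0)
  (hGred : (⨅ α : Ordinal.{u}, (ppow p α : Submodule ℤ G)) = ⊥)
  (hu : ∀ (σ : Ordinal.{u}) (n : ℕ), (n : Cardinal) ≤ uCard p G σ → (n : Cardinal) ≤ uCard p H σ)
include hp hG hH hGred hu

theorem IsFiniteHeightIso.exists_extend_of_smul_mem (hf : IsFiniteHeightIso p f) {x : G}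
    (hpx : p • x ∈ f.domain) :
    ∃ g : G →ₗ.[ℤ] H, f ≤ g ∧ IsFiniteHeightIso p g ∧ x ∈ g.domain := by
  by_cases hx : x ∈ f.domain
  · exact ⟨f, le_rfl, hf, hx⟩
  obtain ⟨s, hs, σ, hxs⟩ := exists_isProperAt_add hGred hf.finite hx
  have hpxs : p • (x + s) ∈ f.domain := by
    rw [smul_add]
    exact add_mem hpx (Submodule.smul_mem _ _ hs)
  obtain ⟨u, hu', y, hy, hxy⟩ := hf.exists_partner hp (hu σ) hxs hpxs
  obtain ⟨g, hfg, hg, hxg⟩ :=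
    hf.exists_extend_of_partner hp hG hH (hxs.add hu'.1 hu'.2) hy hxy
  refine ⟨g, hfg, hg, ?_⟩
  have : x = x + s + u - (s + u) := by abel
  rw [this]
  exact sub_mem hxg (hfg.1 (add_mem hs hu'.1))

theorem IsFiniteHeightIso.exists_extend (hf : IsFiniteHeightIso p f) (x : G) :
    ∃ g : G →ₗ.[ℤ] H, f ≤ g ∧ IsFiniteHeightIso p g ∧ x ∈ g.domain := by
  obtain ⟨k, hk⟩ := hG x
  induction k generalizing x with
  | zero =>
    rw [pow_zero, one_smul] at hk
    exact ⟨f, le_rfl, hf, hk ▸ zero_mem _⟩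
  | succ k ih =>
    obtain ⟨g₁, hfg₁, hg₁, hpx⟩ := ih (p • x) (by rwa [smul_smul, ← pow_succ])
    obtain ⟨g₂, hg₁g₂, hg₂, hx⟩ := hg₁.exists_extend_of_smul_mem hp hG hH hGred hu hpx
    exact ⟨g₂, hfg₁.trans hg₁g₂, hg₂, hx⟩

end Extension

theorem isPartialIsoSystem_setOf_isFiniteHeightIso {G H : Type u} [AddCommGroup G]
    [AddCommGroup H] {p : ℤ} (hp : Prime p)
    (hG : ∀ g : G, ∃ k : ℕ, p ^ k • g = 0) (hH : ∀ h : H, ∃ k : ℕ, p ^ k • h = 0)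
    (hGred : (⨅ α : Ordinal.{u}, (ppow p α : Submodule ℤ G)) = ⊥)
    (hHred : (⨅ α : Ordinal.{u}, (ppow p α : Submodule ℤ H)) = ⊥)
    (hu : ∀ (σ : Ordinal.{u}) (n : ℕ),
      (n : Cardinal) ≤ uCard p G σ ↔ (n : Cardinal) ≤ uCard p H σ) :
    IsPartialIsoSystem {f : G →ₗ.[ℤ] H | IsFiniteHeightIso p f} := by
  refine ⟨⟨⊥, isFiniteHeightIso_bot⟩, fun f hf => hf.injective, fun f hf a => ?_,
    fun f hf b => ?_⟩
  · obtain ⟨g, hfg, hg, ha⟩ := hf.exists_extend hp hG hH hGred (fun σ n => (hu σ n).1) a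
    exact ⟨g, hg, hfg, ha⟩
  · obtain ⟨g, hfg, hg, hb⟩ :=
      hf.inverse.exists_extend hp hH hG hHred (fun σ n => (hu σ n).2) b
    refine ⟨g.inverse, hg.inverse, ?_, ⟨⟨_, LinearPMap.apply_mem_inverse_domain ⟨b, hb⟩⟩,
      LinearPMap.inverse_apply_eq (LinearMap.ker_eq_bot.2 hg.injective) (x := ⟨b, hb⟩) rfl⟩⟩
    rw [← LinearPMap.inverse_inverse (LinearMap.ker_eq_bot.2 hf.injective)]
    exact LinearPMap.inverse_le_inverse (LinearMap.ker_eq_bot.2 hf.inverse.injective)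
      (LinearMap.ker_eq_bot.2 hg.injective) hfg

end UlmW

open UlmW

theorem statement_17 (q : ℕ) (hq : q.Prime) {G H : Type u} [AddCommGroup G]
    [AddCommGroup H]
    (hGp : ∀ g : G, ∃ k : ℕ, (q : ℤ) ^ k • g = 0)
    (hHp : ∀ h : H, ∃ k : ℕ, (q : ℤ) ^ k • h = 0)
    (hGred : (⨅ α : Ordinal.{u}, (ppow ((q : ℤ)) α : Submodule ℤ G)) = ⊥)
    (hHred : (⨅ α : Ordinal.{u}, (ppow ((q : ℤ)) α : Submodule ℤ H)) = ⊥) :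
    (∃ I : Set (G →ₗ.[ℤ] H), IsPartialIsoSystem I) ↔
      ∀ α : Ordinal.{u}, uHat (q : ℤ) G α = uHat (q : ℤ) H α := by
  have hp : Prime (q : ℤ) := Nat.prime_iff_prime_int.1 hq
  simp only [uHat, Cardinal.min_aleph0_eq_min_aleph0_iff]
  constructor
  · rintro ⟨I, hI⟩ σ n
    exact ⟨hI.natCast_le_uCard hp, hI.inverse.natCast_le_uCard hp⟩
  · exact fun hu => ⟨_, isPartialIsoSystem_setOf_isFiniteHeightIso hp hGp hHp hGred hHred hu⟩
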